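/- (Recurrence for OSSCM) Let G=(U,V,E) be a bipartite graph with a fixed linear ordering π_U of U, and let E = E₁ ∪ E₂ ∪ … ∪ E_h be a partition of E into pairwise disjoint color classes. Then for every S ⊆ V and every integer k with 1 ≤ k ≤ |S|−1, OPT_Σ(S) = min over subsets W ⊆ S with |W| = k of (OPT_Σ(W) + OPT_Σ(S∖W) + Σ_{i=1}^{h} γ_i(π_U, W, S∖W)), where γ_i(π_U, W, S∖W) is the number of pairs of edges ((u₁,v₁),(u₂,v₂)) ∈ (E_i ∩ E(W)) × (E_i ∩ E(S∖W)) with π_U(u₂) < π_U(u₁). -/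

import Mathlib

open Finset

/-- Two edges `e₁ = (u₁, v₁)` and `e₂ = (u₂, v₂)` of a bipartite graph
`G = (U, V, E ⊆ U × V)` cross in the 2-level drawing `(πU, πV)`:
`u₁ ≠ u₂`, `v₁ ≠ v₂`, and either `πU u₁ < πU u₂` and `πV v₂ < πV v₁`, or
`πU u₂ < πU u₁` and `πV v₁ < πV v₂`. -/
def Cross {U V : Type*} [Fintype U] [Fintype V]
    (πU : U ≃ Fin (Fintype.card U)) (πV : V ≃ Fin (Fintype.card V))
    (e₁ e₂ : U × V) : Prop :=
  e₁.1 ≠ e₂.1 ∧ e₁.2 ≠ e₂.2 ∧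
    ((πU e₁.1 < πU e₂.1 ∧ πV e₂.2 < πV e₁.2) ∨
     (πU e₂.1 < πU e₁.1 ∧ πV e₁.2 < πV e₂.2))

/-- `E(W)`: the set of edges of `E` whose endpoint in the free layer lies in `W`. -/
noncomputable def edgesIn {U V : Type*} (E : Finset (U × V)) (W : Finset V) :
    Finset (U × V) := by
  classical exact E.filter fun e => e.2 ∈ W

/-- `cr_S(πU, πV)`: the number of distinct unordered pairs of edges of `S` that
cross in `(πU, πV)`.  Since two crossing edges have distinct `U`-endpoints, each
unordered crossing pair is counted exactly once by counting the ordered pairs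
`(e₁, e₂)` that cross and satisfy `πU e₁.1 < πU e₂.1`. -/
noncomputable def cr {U V : Type*} [Fintype U] [Fintype V]
    (πU : U ≃ Fin (Fintype.card U)) (πV : V ≃ Fin (Fintype.card V))
    (S : Finset (U × V)) : ℕ := by
  classical exact
    ((S ×ˢ S).filter fun p => Cross πU πV p.1 p.2 ∧ πU p.1.1 < πU p.2.1).card

/-- `V₁ ≺_{πV} V₂`: every vertex of `V₁` precedes every vertex of `V₂` in `πV`. -/
def Precedes {V : Type*} [Fintype V] (πV : V ≃ Fin (Fintype.card V))
    (V₁ V₂ : Finset V) : Prop :=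
  ∀ v₁ ∈ V₁, ∀ v₂ ∈ V₂, πV v₁ < πV v₂

open scoped Classical in
/-- `OPT_Σ(S)` for OSSCM: the minimum over all linear orderings `πV` of `V` of
`Σ_{i=1}^{h} cr_{E_i ∩ E(S)}(πU, πV)`, where `Ecl i` is the `i`-th color class. -/
noncomputable def OPTsigma {U V : Type*} [Fintype U] [Fintype V] {h : ℕ}
    (E : Finset (U × V)) (Ecl : Fin h → Finset (U × V))
    (πU : U ≃ Fin (Fintype.card U)) (S : Finset V) : ℕ :=
  sInf {c | ∃ πV : V ≃ Fin (Fintype.card V),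
    c = ∑ i : Fin h, cr πU πV (Ecl i ∩ edgesIn E S)}

open scoped Classical in
/-- `γ_i(πU, V₁, V₂)`: the number of pairs of edges
`((u₁, v₁), (u₂, v₂)) ∈ (E_i ∩ E(V₁)) × (E_i ∩ E(V₂))` with `πU u₂ < πU u₁`. -/
noncomputable def gammaCl {U V : Type*} [Fintype U] {h : ℕ}
    (E : Finset (U × V)) (Ecl : Fin h → Finset (U × V)) (i : Fin h)
    (πU : U ≃ Fin (Fintype.card U)) (V₁ V₂ : Finset V) : ℕ :=
  (((Ecl i ∩ edgesIn E V₁) ×ˢ (Ecl i ∩ edgesIn E V₂)).filter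
    fun p => πU p.2.1 < πU p.1.1).card

/-!
If every vertex of `W` precedes every vertex of `W'` in `πV`, then two edges of the same colour,
one ending in `W` and one in `W'`, cross exactly when the `U`-endpoint of the second precedes
that of the first; so the crossings within `W ∪ W'` are those within `W`, those within `W'`, and
the `γ`-pairs, which do not depend on `πV`. Since crossing numbers only see the relative order of
the `V`-endpoints involved, optimal orderings of `W` and `S \ W` can be concatenated, and
conversely an optimal ordering of `S` splits after its first `k` vertices.
-/

section

variable {U V : Type*}

lemma mem_edgesIn {E : Finset (U × V)} {W : Finset V} {e : U × V} :
    e ∈ edgesIn E W ↔ e ∈ E ∧ e.2 ∈ W := by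
  classical
  simp [edgesIn]

lemma edgesIn_union [DecidableEq U] [DecidableEq V] (E : Finset (U × V)) (W W' : Finset V) :
    edgesIn E (W ∪ W') = edgesIn E W ∪ edgesIn E W' := by
  ext e
  simp only [mem_union, mem_edgesIn, and_or_left]

variable [Fintype V]

lemma exists_equivFin_lt_iff_lt {α : Type*} [LinearOrder α] {f : V → α}
    (hf : Function.Injective f) :
    ∃ π : V ≃ Fin (Fintype.card V), ∀ v w, π v < π w ↔ f v < f w := by
  let _ : LinearOrder V := LinearOrder.lift' f hf
  exact ⟨(monoEquivOfFin V rfl).symm.toEquiv, fun v w => (monoEquivOfFin V rfl).symm.lt_iff_lt⟩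

lemma exists_precedes_of_disjoint (π₁ π₂ : V ≃ Fin (Fintype.card V)) {W W' : Finset V}
    (hd : Disjoint W W') :
    ∃ πV : V ≃ Fin (Fintype.card V), Precedes πV W W' ∧
      (∀ v ∈ W, ∀ w ∈ W, πV v < πV w ↔ π₁ v < π₁ w) ∧
      (∀ v ∈ W', ∀ w ∈ W', πV v < πV w ↔ π₂ v < π₂ w) := by
  classical
  let key : V → ℕ ×ₗ Fin (Fintype.card V) := fun v =>
    toLex (if v ∈ W then 0 else 1, if v ∈ W then π₁ v else π₂ v)
  have hkey : Function.Injective key := by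
    intro v w hvw
    simp only [key, toLex_inj, Prod.mk.injEq] at hvw
    by_cases hv : v ∈ W <;> by_cases hw : w ∈ W <;> simp_all
  obtain ⟨πV, hπV⟩ := exists_equivFin_lt_iff_lt hkey
  refine ⟨πV, fun v hv w hw => ?_, fun v hv w hw => ?_, fun v hv w hw => ?_⟩
  · have hw' : w ∉ W := disjoint_right.mp hd hw
    simp [hπV, key, Prod.Lex.toLex_lt_toLex, hv, hw']
  · simp [hπV, key, Prod.Lex.toLex_lt_toLex, hv, hw]
  · have hv' : v ∉ W := disjoint_right.mp hd hv
    have hw' : w ∉ W := disjoint_right.mp hd hw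
    simp [hπV, key, Prod.Lex.toLex_lt_toLex, hv', hw']

lemma exists_subset_card_eq_precedes [DecidableEq V] (πV : V ≃ Fin (Fintype.card V))
    {S : Finset V} {k : ℕ} (hk : k ≤ S.card) : ∃ W ⊆ S, W.card = k ∧ Precedes πV W (S \ W) := by
  induction k with
  | zero => exact ⟨∅, empty_subset _, rfl, by simp [Precedes]⟩
  | succ k ih =>
    obtain ⟨W, hWS, hcard, hW⟩ := ih (Nat.le_of_succ_le hk)
    have hne : (S \ W).Nonempty := by
      rw [← card_pos, card_sdiff_of_subset hWS, hcard]
      omega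
    obtain ⟨v₀, hv₀, hmin⟩ := exists_min_image (S \ W) πV hne
    obtain ⟨hv₀S, hv₀W⟩ := mem_sdiff.mp hv₀
    refine ⟨insert v₀ W, insert_subset hv₀S hWS, by rw [card_insert_of_notMem hv₀W, hcard],
      fun w hw v hv => ?_⟩
    obtain ⟨hvS, hv⟩ := mem_sdiff.mp hv
    obtain ⟨hvv₀, hvW⟩ := not_or.mp (mem_insert.not.mp hv)
    rcases mem_insert.mp hw with rfl | hwW
    · exact (hmin v (mem_sdiff.mpr ⟨hvS, hvW⟩)).lt_of_ne (πV.injective.ne (Ne.symm hvv₀))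
    · exact hW w hwW v (mem_sdiff.mpr ⟨hvS, hvW⟩)

variable [Fintype U] (πU : U ≃ Fin (Fintype.card U))

lemma cross_comm (πV : V ≃ Fin (Fintype.card V)) (e f : U × V) :
    Cross πU πV e f ↔ Cross πU πV f e := by
  unfold Cross
  tauto

lemma cross_iff_of_lt {πV : V ≃ Fin (Fintype.card V)} {e f : U × V} (h : πV e.2 < πV f.2) :
    Cross πU πV e f ↔ πU f.1 < πU e.1 := by
  refine ⟨fun ⟨_, _, hc⟩ => ?_, fun hu => ⟨?_, ?_, Or.inr ⟨hu, h⟩⟩⟩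
  · rcases hc with ⟨_, h'⟩ | ⟨hu, _⟩
    · exact absurd h h'.asymm
    · exact hu
  · exact fun heq => hu.ne (congrArg πU heq.symm)
  · exact fun heq => h.ne (congrArg πV heq)

open scoped Classical in
lemma cr_eq_sum (πV : V ≃ Fin (Fintype.card V)) (T : Finset (U × V)) :
    cr πU πV T = ∑ e ∈ T, ∑ f ∈ T, if Cross πU πV e f ∧ πU e.1 < πU f.1 then 1 else 0 := by
  rw [cr, card_filter, sum_product]

lemma cr_congr {πV πV' : V ≃ Fin (Fintype.card V)} {T : Finset (U × V)}
    (h : ∀ e ∈ T, ∀ f ∈ T, πV e.2 < πV f.2 ↔ πV' e.2 < πV' f.2) :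
    cr πU πV T = cr πU πV' T := by
  classical
  simp only [cr_eq_sum]
  refine sum_congr rfl fun e he => sum_congr rfl fun f hf => ?_
  exact if_congr (by simp only [Cross, h e he f hf, h f hf e he]) rfl rfl

lemma cr_union_of_lt [DecidableEq U] [DecidableEq V] (πV : V ≃ Fin (Fintype.card V))
    {A B : Finset (U × V)} (hAB : ∀ a ∈ A, ∀ b ∈ B, πV a.2 < πV b.2) :
    cr πU πV (A ∪ B) =
      cr πU πV A + cr πU πV B + #{p ∈ A ×ˢ B | πU p.2.1 < πU p.1.1} := by
  classical
  have hd : Disjoint A B := disjoint_left.mpr fun a ha hb => lt_irrefl _ (hAB a ha a hb)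
  have hAB_zero : ∀ a ∈ A, ∀ b ∈ B, ¬ (Cross πU πV a b ∧ πU a.1 < πU b.1) := by
    rintro a ha b hb ⟨hc, hu⟩
    exact hu.asymm ((cross_iff_of_lt πU (hAB a ha b hb)).mp hc)
  have hBA : ∀ a ∈ A, ∀ b ∈ B, (Cross πU πV b a ∧ πU b.1 < πU a.1) ↔ πU b.1 < πU a.1 := by
    intro a ha b hb
    rw [cross_comm, cross_iff_of_lt πU (hAB a ha b hb), and_self]
  simp only [cr_eq_sum, sum_union hd, sum_add_distrib, card_filter, sum_product]
  rw [sum_congr rfl fun a ha => sum_congr rfl fun b hb => if_neg (hAB_zero a ha b hb),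
    sum_comm (s := B), sum_congr rfl fun a ha => sum_congr rfl fun b hb =>
      if_congr (hBA a ha b hb) rfl rfl]
  simp only [sum_const_zero]
  ring

end

section

variable {U V : Type*} [Fintype U] [Fintype V] {h : ℕ} (E : Finset (U × V))
  (Ecl : Fin h → Finset (U × V)) (πU : U ≃ Fin (Fintype.card U))

open scoped Classical in
noncomputable def crSigma (πV : V ≃ Fin (Fintype.card V)) (S : Finset V) : ℕ :=
  ∑ i : Fin h, cr πU πV (Ecl i ∩ edgesIn E S)

lemma crSigma_congr {πV πV' : V ≃ Fin (Fintype.card V)} {S : Finset V}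
    (hS : ∀ v ∈ S, ∀ w ∈ S, πV v < πV w ↔ πV' v < πV' w) :
    crSigma E Ecl πU πV S = crSigma E Ecl πU πV' S := by
  classical
  refine sum_congr rfl fun i _ => cr_congr πU fun e he f hf => ?_
  exact hS _ (mem_edgesIn.mp (mem_inter.mp he).2).2 _ (mem_edgesIn.mp (mem_inter.mp hf).2).2

open scoped Classical in
lemma crSigma_union_of_precedes {πV : V ≃ Fin (Fintype.card V)}
    {W W' : Finset V} (hp : Precedes πV W W') :
    crSigma E Ecl πU πV (W ∪ W') = crSigma E Ecl πU πV W + crSigma E Ecl πU πV W' +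
      ∑ i : Fin h, gammaCl E Ecl i πU W W' := by
  simp only [crSigma, ← sum_add_distrib]
  refine sum_congr rfl fun i _ => ?_
  rw [edgesIn_union, inter_union_distrib_left, cr_union_of_lt, gammaCl]
  exact fun a ha b hb =>
    hp _ (mem_edgesIn.mp (mem_inter.mp ha).2).2 _ (mem_edgesIn.mp (mem_inter.mp hb).2).2

lemma OPTsigma_le_crSigma (πV : V ≃ Fin (Fintype.card V)) (S : Finset V) :
    OPTsigma E Ecl πU S ≤ crSigma E Ecl πU πV S :=
  Nat.sInf_le ⟨πV, rfl⟩

lemma exists_crSigma_eq_OPTsigma (S : Finset V) :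
    ∃ πV : V ≃ Fin (Fintype.card V), crSigma E Ecl πU πV S = OPTsigma E Ecl πU S := by
  obtain ⟨πV, hπV⟩ : OPTsigma E Ecl πU S ∈ {c | ∃ πV, c = crSigma E Ecl πU πV S} :=
    Nat.sInf_mem ⟨_, Fintype.equivFin V, rfl⟩
  exact ⟨πV, hπV.symm⟩

end

open scoped Classical in
theorem OPTsigma_dp_recurrence_general {U V : Type*} [Fintype U] [Fintype V] {h : ℕ}
    (E : Finset (U × V)) (Ecl : Fin h → Finset (U × V))
    (πU : U ≃ Fin (Fintype.card U))
    (S : Finset V) (k : ℕ) (hk₂ : k ≤ S.card - 1) :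
    OPTsigma E Ecl πU S =
      sInf {c | ∃ W ⊆ S, W.card = k ∧
        c = OPTsigma E Ecl πU W + OPTsigma E Ecl πU (S \ W) +
              ∑ i : Fin h, gammaCl E Ecl i πU W (S \ W)} := by
  have hk : k ≤ S.card := hk₂.trans (Nat.sub_le _ _)
  apply le_antisymm
  · obtain ⟨W, hWS, hW⟩ := exists_subset_card_eq hk
    refine le_csInf ⟨_, W, hWS, hW, rfl⟩ ?_
    rintro _ ⟨W, hWS, -, rfl⟩
    obtain ⟨π₁, h₁⟩ := exists_crSigma_eq_OPTsigma E Ecl πU W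
    obtain ⟨π₂, h₂⟩ := exists_crSigma_eq_OPTsigma E Ecl πU (S \ W)
    obtain ⟨πV, hp, hπ₁, hπ₂⟩ := exists_precedes_of_disjoint π₁ π₂ (disjoint_sdiff (s := W))
    calc OPTsigma E Ecl πU S ≤ crSigma E Ecl πU πV (W ∪ S \ W) := by
          rw [union_sdiff_of_subset hWS]; exact OPTsigma_le_crSigma E Ecl πU πV S
      _ = _ := by
          rw [crSigma_union_of_precedes E Ecl πU hp, crSigma_congr E Ecl πU hπ₁,
            crSigma_congr E Ecl πU hπ₂, h₁, h₂]
  · obtain ⟨πV, hπV⟩ := exists_crSigma_eq_OPTsigma E Ecl πU S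
    obtain ⟨W, hWS, hW, hp⟩ := exists_subset_card_eq_precedes πV hk
    refine le_trans (Nat.sInf_le ⟨W, hWS, hW, rfl⟩) ?_
    calc _ ≤ crSigma E Ecl πU πV W + crSigma E Ecl πU πV (S \ W) +
          ∑ i : Fin h, gammaCl E Ecl i πU W (S \ W) := by
          gcongr <;> exact OPTsigma_le_crSigma E Ecl πU πV _
      _ = OPTsigma E Ecl πU S := by
          rw [← crSigma_union_of_precedes E Ecl πU hp, union_sdiff_of_subset hWS, hπV]

open scoped Classical in
/-- recurrence for OSSCM: if `E = E₁ ∪ ⋯ ∪ E_h` is a partition of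
`E` into pairwise disjoint color classes, then for every `S ⊆ V` and every `k`
with `1 ≤ k ≤ |S| − 1`,
`OPT_Σ(S) = min_{W ⊆ S, |W| = k} (OPT_Σ(W) + OPT_Σ(S \ W) + Σ_i γ_i(πU, W, S \ W))`. -/
theorem OPTsigma_dp_recurrence {U V : Type*} [Fintype U] [Fintype V] {h : ℕ}
    (E : Finset (U × V)) (Ecl : Fin h → Finset (U × V))
    (hcover : E = Finset.univ.biUnion Ecl)
    (hdisj : ∀ i j : Fin h, i ≠ j → Disjoint (Ecl i) (Ecl j))
    (πU : U ≃ Fin (Fintype.card U))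
    (S : Finset V) (k : ℕ) (hk₁ : 1 ≤ k) (hk₂ : k ≤ S.card - 1) :
    OPTsigma E Ecl πU S =
      sInf {c | ∃ W ⊆ S, W.card = k ∧
        c = OPTsigma E Ecl πU W + OPTsigma E Ecl πU (S \ W) +
              ∑ i : Fin h, gammaCl E Ecl i πU W (S \ W)} :=
  OPTsigma_dp_recurrence_general E Ecl πU S k hk₂
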